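/- Let w ∈ {a,b,α,β}*. The morphism φ_w (the composition of the elementary morphisms indexed by the letters of w) is primitive if and only if w contains at least one letter from {a,b} and at least one letter from {α,β}. -/

import Mathlib

/-- The four-letter alphabet {a, b, α, β} indexing the elementary Sturmian
morphisms. -/
inductive Elem | a | b | al | be
deriving DecidableEq

/-- The elementary Sturmian morphisms, by their letter images (false = 0,
true = 1): φ_a: 0↦0, 1↦10; φ_b: 0↦0, 1↦01; φ_α: 0↦01, 1↦1; φ_β: 0↦10, 1↦1. -/
def mor : Elem → Bool → List Bool
  | Elem.a => fun c => match c with | false => [false] | true => [true, false]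
  | Elem.b => fun c => match c with | false => [false] | true => [false, true]
  | Elem.al => fun c => match c with | false => [false, true] | true => [true]
  | Elem.be => fun c => match c with | false => [true, false] | true => [true]

/-- Apply a morphism (given by letter images) to a finite word. -/
def apm (f : Bool → List Bool) (w : List Bool) : List Bool := w.flatMap f

/-- φ_w for w = w₁…wₙ: the composition φ_{w₁}∘…∘φ_{wₙ} on finite words. -/
def phiW (w : List Elem) : List Bool → List Bool :=
  w.foldr (fun c g => apm (mor c) ∘ g) id

/-- A morphism on {0,1}* is primitive if some power of it maps each letter to a
word containing both letters. -/
def Primitive (ψ : List Bool → List Bool) : Prop :=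
  ∃ k, ∀ a b : Bool, b ∈ ψ^[k] [a]

lemma phiW_cons (d : Elem) (w : List Elem) (u : List Bool) :
    phiW (d :: w) u = apm (mor d) (phiW w u) := rfl

lemma mem_mor_self (c : Elem) (x : Bool) : x ∈ mor c x := by
  cases c <;> cases x <;> simp [mor]

lemma mem_apm {x : Bool} {u : List Bool} (h : x ∈ u) (c : Elem) :
    x ∈ apm (mor c) u :=
  List.mem_flatMap.2 ⟨x, h, mem_mor_self c x⟩

lemma apm_ne_nil (c : Elem) {u : List Bool} (h : u ≠ []) : apm (mor c) u ≠ [] := by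
  cases u with
  | nil => exact absurd rfl h
  | cons x t =>
    intro hnil
    have : x ∈ apm (mor c) (x :: t) := mem_apm (by simp) c
    rw [hnil] at this
    exact absurd this List.not_mem_nil

lemma phiW_ne_nil (w : List Elem) (c : Bool) : phiW w [c] ≠ [] := by
  induction w with
  | nil => simp [phiW]
  | cons d t ih => rw [phiW_cons]; exact apm_ne_nil d ih

lemma latin_false_mem (d : Elem) (hd : d = Elem.a ∨ d = Elem.b) {u : List Bool}
    (h : u ≠ []) : false ∈ apm (mor d) u := by
  cases u with
  | nil => exact absurd rfl h
  | cons x t =>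
    refine List.mem_flatMap.2 ⟨x, by simp, ?_⟩
    rcases hd with rfl | rfl <;> cases x <;> simp [mor]

lemma greek_true_mem (d : Elem) (hd : d = Elem.al ∨ d = Elem.be) {u : List Bool}
    (h : u ≠ []) : true ∈ apm (mor d) u := by
  cases u with
  | nil => exact absurd rfl h
  | cons x t =>
    refine List.mem_flatMap.2 ⟨x, by simp, ?_⟩
    rcases hd with rfl | rfl <;> cases x <;> simp [mor]

lemma latin_mem {w : List Elem} (h : ∃ x ∈ w, x = Elem.a ∨ x = Elem.b) (c : Bool) :
    false ∈ phiW w [c] := by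
  induction w with
  | nil => simp at h
  | cons d t ih =>
    rw [phiW_cons]
    rcases h with ⟨x, hx, hlat⟩
    rcases List.mem_cons.1 hx with rfl | hx'
    · exact latin_false_mem x hlat (phiW_ne_nil t c)
    · exact mem_apm (ih ⟨x, hx', hlat⟩) d

lemma greek_mem {w : List Elem} (h : ∃ x ∈ w, x = Elem.al ∨ x = Elem.be) (c : Bool) :
    true ∈ phiW w [c] := by
  induction w with
  | nil => simp at h
  | cons d t ih =>
    rw [phiW_cons]
    rcases h with ⟨x, hx, hg⟩
    rcases List.mem_cons.1 hx with rfl | hx'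
    · exact greek_true_mem x hg (phiW_ne_nil t c)
    · exact mem_apm (ih ⟨x, hx', hg⟩) d

lemma all_greek_fix {w : List Elem} (h : ∀ x ∈ w, ¬(x = Elem.a ∨ x = Elem.b)) :
    phiW w [true] = [true] := by
  induction w with
  | nil => rfl
  | cons d t ih =>
    rw [phiW_cons, ih (fun x hx => h x (List.mem_cons_of_mem d hx))]
    have hd := h d List.mem_cons_self
    cases d <;> simp_all [apm, mor]

lemma all_latin_fix {w : List Elem} (h : ∀ x ∈ w, ¬(x = Elem.al ∨ x = Elem.be)) :
    phiW w [false] = [false] := by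
  induction w with
  | nil => rfl
  | cons d t ih =>
    rw [phiW_cons, ih (fun x hx => h x (List.mem_cons_of_mem d hx))]
    have hd := h d List.mem_cons_self
    cases d <;> simp_all [apm, mor]

/-- φ_w is primitive iff w contains at least one Latin letter (a or b) and at
least one Greek letter (α or β). -/
theorem phiW_primitive_iff (w : List Elem) :
    Primitive (phiW w) ↔
      ((∃ x ∈ w, x = Elem.a ∨ x = Elem.b) ∧ (∃ x ∈ w, x = Elem.al ∨ x = Elem.be)) := by
  constructor
  · rintro ⟨k, hk⟩
    constructor
    · by_contra hno
      push_neg at hno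
      have hfix : phiW w [true] = [true] :=
        all_greek_fix (by intro x hx; rcases hno x hx with ⟨h1, h2⟩; rintro (rfl|rfl) <;> simp_all)
      have hiter : (phiW w)^[k] [true] = [true] := Function.iterate_fixed hfix k
      have := hk true false
      rw [hiter] at this
      simp at this
    · by_contra hno
      push_neg at hno
      have hfix : phiW w [false] = [false] :=
        all_latin_fix (by intro x hx; rcases hno x hx with ⟨h1, h2⟩; rintro (rfl|rfl) <;> simp_all)
      have hiter : (phiW w)^[k] [false] = [false] := Function.iterate_fixed hfix k
      have := hk false true
      rw [hiter] at this
      simp at this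
  · rintro ⟨hlat, hg⟩
    refine ⟨1, fun a b => ?_⟩
    rw [Function.iterate_one]
    cases b
    · exact latin_mem hlat a
    · exact greek_mem hg a
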